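/- For nonnegative integers N, m, s, t, p with the standard convention that binomial coefficients with negative or out-of-range arguments vanish, the identity Σ_{p≥0} (−1)^p · C(N−p, m−p) · C(s, p) · C(s−p, t) = C(s, t) · C(N−s+t, m) holds. -/

import Mathlib

lemma trinom (s p t : ℕ) : s.choose p * (s - p).choose t = s.choose t * (s - t).choose p := by
  rcases le_or_gt (p + t) s with h | h
  · have h1 : s.choose (p + t) * (p + t).choose p = s.choose p * (s - p).choose t := by
      have := Nat.choose_mul (n := s) (Nat.le_add_right p t)
      simpa using this
    have h2 : s.choose (p + t) * (p + t).choose t = s.choose t * (s - t).choose p := by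
      have := Nat.choose_mul (n := s) (Nat.le_add_left t p)
      simpa using this
    have h3 : (p + t).choose p = (p + t).choose t := by
      rw [← Nat.choose_symm (Nat.le_add_right p t)]
      congr 1
      omega
    rw [← h1, ← h2, h3]
  · rcases le_or_gt p s with hp | hp
    · have hz : (s - p).choose t = 0 := Nat.choose_eq_zero_of_lt (by omega)
      rw [hz, mul_zero]
      rcases le_or_gt t s with ht | ht
      · rw [Nat.choose_eq_zero_of_lt (show s - t < p by omega), mul_zero]
      · rw [Nat.choose_eq_zero_of_lt ht, zero_mul]
    · rw [Nat.choose_eq_zero_of_lt hp, zero_mul]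
      rcases le_or_gt t s with ht' | ht'
      · rw [Nat.choose_eq_zero_of_lt (show s - t < p by omega), mul_zero]
      · rw [Nat.choose_eq_zero_of_lt ht', zero_mul]

lemma key : ∀ k N m : ℕ, k ≤ N →
    ∑ p ∈ Finset.range (m + 1),
        (-1 : ℤ) ^ p * ((N - p).choose (m - p)) * (k.choose p)
      = ((N - k).choose m) := by
  intro k
  induction k with
  | zero =>
    intro N m _
    rw [Finset.sum_eq_single 0]
    · simp
    · intro b _ hb
      rw [show (0:ℕ).choose b = 0 from Nat.choose_eq_zero_of_lt (by omega)]
      simp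
    · simp
  | succ k ih =>
    intro N m hk
    cases m with
    | zero => simp
    | succ m' =>
      rw [Finset.sum_range_succ']
      have expand : ∀ i ∈ Finset.range (m' + 1),
          (-1 : ℤ) ^ (i+1) * ((N - (i+1)).choose (m' + 1 - (i+1))) * ((k+1).choose (i+1))
          = (-1 : ℤ) ^ (i+1) * (((N-1) - i).choose (m' - i)) * (k.choose i)
            + (-1 : ℤ) ^ (i+1) * ((N - (i+1)).choose (m' + 1 - (i+1))) * (k.choose (i+1)) := by
        intro i _
        rw [Nat.choose_succ_succ]
        have e1 : N - (i+1) = (N-1) - i := by omega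
        have e2 : m' + 1 - (i+1) = m' - i := by omega
        rw [e1, e2]
        push_cast
        ring
      rw [Finset.sum_congr rfl expand, Finset.sum_add_distrib]
      have hA : ∑ i ∈ Finset.range (m' + 1),
          (-1 : ℤ) ^ (i+1) * (((N-1) - i).choose (m' - i)) * (k.choose i)
          = -((((N-1) - k).choose m' : ℤ)) := by
        have h := ih (N-1) m' (by omega)
        calc ∑ i ∈ Finset.range (m' + 1),
              (-1 : ℤ) ^ (i+1) * (((N-1) - i).choose (m' - i)) * (k.choose i)
            = -∑ i ∈ Finset.range (m' + 1),
              (-1 : ℤ) ^ i * (((N-1) - i).choose (m' - i)) * (k.choose i) := by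
              rw [← Finset.sum_neg_distrib]
              exact Finset.sum_congr rfl (fun i _ => by ring)
          _ = -((((N-1) - k).choose m' : ℤ)) := by rw [h]
      have hB := ih N (m' + 1) (by omega)
      rw [Finset.sum_range_succ'] at hB
      have pascal : (((N - k).choose (m' + 1) : ℤ))
          = ((N - (k+1)).choose m' : ℤ) + ((N - (k+1)).choose (m' + 1) : ℤ) := by
        have e : N - k = (N - (k+1)) + 1 := by omega
        rw [e, Nat.choose_succ_succ' (N - (k+1)) m']
        push_cast
        ring
      have e3 : N - 1 - k = N - (k+1) := by omega
      rw [hA, e3]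
      simp only [pow_zero, one_mul, Nat.sub_zero, Nat.choose_zero_right, Nat.cast_one, mul_one,
        Nat.add_sub_cancel] at hB ⊢
      linarith

/-- The binomial identity
Σ_{p≥0} (−1)^p C(N−p, m−p) C(s, p) C(s−p, t) = C(s, t) C(N−s+t, m),
used in the proof of Lemma 6 of the paper.  Terms with p > m vanish by the
convention C(a,b) = 0 for b < 0, so the sum is taken over 0 ≤ p ≤ m; the
hypothesis s ≤ N ensures all remaining binomial arguments are nonnegative. -/
theorem stmt4 (N m s t : ℕ) (hsN : s ≤ N) :
    ∑ p ∈ Finset.range (m + 1),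
        (-1 : ℤ) ^ p * ((N - p).choose (m - p)) * (s.choose p) * ((s - p).choose t)
      = (s.choose t) * ((N - s + t).choose m) := by
  rcases le_or_gt t s with ht | ht
  · have step : ∀ p ∈ Finset.range (m + 1),
        (-1 : ℤ) ^ p * ((N - p).choose (m - p)) * (s.choose p) * ((s - p).choose t)
        = (s.choose t : ℤ) * ((-1 : ℤ) ^ p * ((N - p).choose (m - p)) * ((s - t).choose p)) := by
      intro p _
      have h : ((s.choose p : ℤ)) * ((s - p).choose t) = (s.choose t) * ((s - t).choose p) := by
        exact_mod_cast trinom s p t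
      linear_combination ((-1 : ℤ) ^ p * ((N - p).choose (m - p))) * h
    rw [Finset.sum_congr rfl step, ← Finset.mul_sum, key (s - t) N m (by omega)]
    have e : N - (s - t) = N - s + t := by omega
    rw [e]
  · rw [Nat.choose_eq_zero_of_lt ht]
    rw [Finset.sum_eq_zero]
    · simp
    · intro p _
      rw [Nat.choose_eq_zero_of_lt (show s - p < t by omega)]
      simp
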